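/- Let g be a finite dimensional unital associative algebra with non-degenerate trace form Tr and dual bases {u_i},{u^i}. For k ≥ 1 define C_k = (1/k)∑_{i₁,…,i_k} u_{i₁}⋯u_{i_k} Tr(u^{i₁}⋯u^{i_k}) ∈ S(g). Then C_k is a Casimir of g: ∑_i (∂C_k/∂u_i)[x,u_i] = 0 for all x ∈ g. -/

import Mathlib

/-!
Put `U = ∑ i, X i ⊗ₜ v i` in `MvPolynomial ι F ⊗[F] g` and extend `Tr` coefficientwise; then
`C_k = k⁻¹ • Tr (U ^ k)`. The left-hand side is `D C_k` for the derivation `D` with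
`D (X i) = ℓ [x, b i]`. By the dual-basis expansion `p = ∑ i, Tr (b i * p) • v i` (this is where
non-degeneracy enters), `D ⊗ id` maps `U` to the commutator `[U, 1 ⊗ₜ x]`, hence by the Leibniz
rule maps `U ^ k` to `[U ^ k, 1 ⊗ₜ x]`, whose trace vanishes by cyclicity.
-/

open MvPolynomial TensorProduct

theorem MvPolynomial.derivation_eq_sum_pderiv_mul {R σ : Type*} [CommSemiring R] [Fintype σ]
    [DecidableEq σ] (D : Derivation R (MvPolynomial σ R) (MvPolynomial σ R))
    (p : MvPolynomial σ R) : D p = ∑ i, pderiv i p * D (X i) := by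
  have hsum : ∀ (E : σ → Derivation R (MvPolynomial σ R) (MvPolynomial σ R)) q,
      (∑ i, E i) q = ∑ i, E i q := fun E q =>
    congrFun (map_sum Derivation.coeFnAddMonoidHom E Finset.univ) q |>.trans
      (Finset.sum_apply _ _ _)
  have hD : D = ∑ i, D (X i) • pderiv i := derivation_ext fun j => by
    simp [hsum, pderiv_X, Pi.single_apply]
  conv_lhs => rw [hD]
  simp [hsum, mul_comm]

theorem Finset.sum_pow_eq_sum_list_prod_ofFn {A ι : Type*} [Semiring A] [Fintype ι] (a : ι → A)
    (n : ℕ) :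
    (∑ i, a i) ^ n = ∑ f : Fin n → ι, (List.ofFn fun t => a (f t)).prod := by
  induction n with
  | zero => simp
  | succ n ih =>
    rw [pow_succ', ih, Finset.sum_mul_sum, ← (Fin.consEquiv fun _ => ι).sum_comp,
      Fintype.sum_prod_type]
    simp [List.ofFn_succ]

theorem Algebra.TensorProduct.list_prod_ofFn_tmul {R A B : Type*} [CommSemiring R]
    [CommSemiring A] [Algebra R A] [Semiring B] [Algebra R B] {n : ℕ} (a : Fin n → A)
    (p : Fin n → B) :
    (List.ofFn fun t => a t ⊗ₜ[R] p t).prod = (∏ t, a t) ⊗ₜ (List.ofFn p).prod := by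
  induction n with
  | zero => simp [Algebra.TensorProduct.one_def]
  | succ n ih => simp [List.ofFn_succ, Fin.prod_univ_succ, ih]

section BaseChangeTrace
variable {F M N g : Type*} [CommRing F] [AddCommGroup M] [Module F M] [AddCommGroup N]
  [Module F N] [AddCommGroup g] [Module F g]

def baseChangeTrace (Tr : g →ₗ[F] F) : M ⊗[F] g →ₗ[F] M :=
  (TensorProduct.rid F M).toLinearMap ∘ₗ Tr.lTensor M

@[simp]
theorem baseChangeTrace_tmul (Tr : g →ₗ[F] F) (m : M) (p : g) :
    baseChangeTrace Tr (m ⊗ₜ p) = Tr p • m := rfl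

theorem baseChangeTrace_rTensor (Tr : g →ₗ[F] F) (φ : M →ₗ[F] N) (a : M ⊗[F] g) :
    baseChangeTrace Tr (φ.rTensor g a) = φ (baseChangeTrace Tr a) := by
  induction a using TensorProduct.induction_on with
  | zero => simp
  | tmul m p => simp
  | add a b ha hb => simp [ha, hb]

end BaseChangeTrace

theorem baseChangeTrace_mul_comm {F R g : Type*} [CommRing F] [CommRing R] [Algebra F R]
    [Ring g] [Algebra F g] {Tr : g →ₗ[F] F} (hTr : ∀ p q, Tr (p * q) = Tr (q * p))
    (a b : R ⊗[F] g) : baseChangeTrace Tr (a * b) = baseChangeTrace Tr (b * a) := by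
  induction a using TensorProduct.induction_on with
  | zero => simp
  | add a a' ha ha' => simp [add_mul, mul_add, ha, ha']
  | tmul r p =>
    induction b using TensorProduct.induction_on with
    | zero => simp
    | add b b' hb hb' => simp [add_mul, mul_add, hb, hb']
    | tmul s q => simp [hTr p q, mul_comm r s]

theorem Derivation.rTensor_mul {F R g : Type*} [CommRing F] [CommRing R] [Algebra F R]
    [Ring g] [Algebra F g] (D : Derivation F R R) (a b : R ⊗[F] g) :
    (D : R →ₗ[F] R).rTensor g (a * b) =
      (D : R →ₗ[F] R).rTensor g a * b + a * (D : R →ₗ[F] R).rTensor g b := by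
  induction a using TensorProduct.induction_on with
  | zero => simp
  | add a a' ha ha' => simp only [add_mul, map_add, ha, ha']; abel
  | tmul r p =>
    induction b using TensorProduct.induction_on with
    | zero => simp
    | add b b' hb hb' => simp only [mul_add, map_add, hb, hb']; abel
    | tmul s q => simp [Derivation.leibniz, add_tmul, mul_comm, add_comm]

theorem map_pow_eq_commutator_of_leibniz {A : Type*} [Ring A] (δ : A → A)
    (hδ : ∀ a b, δ (a * b) = δ a * b + a * δ b) {u y : A} (hu : δ u = u * y - y * u) (n : ℕ) :
    δ (u ^ n) = u ^ n * y - y * u ^ n := by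
  induction n with
  | zero =>
    have h := hδ 1 1
    simp only [mul_one, one_mul, left_eq_add] at h
    simp [h]
  | succ n ih =>
    rw [pow_succ, hδ, ih, hu]
    noncomm_ring

section DualBasis
variable {F g ι : Type*} [CommRing F] [Ring g] [Algebra F g] [Fintype ι] [DecidableEq ι]
  (b : Module.Basis ι F g) {v : ι → g} {Tr : g →ₗ[F] F}

theorem Module.Basis.repr_eq_trace_mul (hdual : ∀ i j, Tr (b i * v j) = if i = j then 1 else 0)
    (p : g) (i : ι) : b.repr p i = Tr (p * v i) := by
  conv_rhs => rw [← b.sum_repr p]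
  rw [Finset.sum_mul, map_sum]
  simp [hdual]

theorem Module.Basis.sum_trace_mul_smul_eq (hTr : ∀ p q, Tr (p * q) = Tr (q * p))
    (hnd : ∀ p : g, (∀ q : g, Tr (p * q) = 0) → p = 0)
    (hdual : ∀ i j, Tr (b i * v j) = if i = j then 1 else 0) (p : g) :
    ∑ i, Tr (b i * p) • v i = p := by
  symm
  rw [← sub_eq_zero]
  refine hnd _ fun q => ?_
  have hq : Tr.comp (LinearMap.mulLeft F (p - ∑ i, Tr (b i * p) • v i)) = 0 :=
    b.ext fun j => by simp [hTr _ (b j), mul_sub, Finset.mul_sum, hdual]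
  exact LinearMap.congr_fun hq q

theorem Module.Basis.sum_tmul_commutator {M : Type*} [AddCommGroup M] [Module F M]
    (hTr : ∀ p q, Tr (p * q) = Tr (q * p))
    (hnd : ∀ p : g, (∀ q : g, Tr (p * q) = 0) → p = 0)
    (hdual : ∀ i j, Tr (b i * v j) = if i = j then 1 else 0) (ℓ : g →ₗ[F] M) (x : g) :
    ∑ i, ℓ (x * b i - b i * x) ⊗ₜ[F] v i = ∑ j, ℓ (b j) ⊗ₜ (v j * x - x * v j) := by
  have hℓ : ∀ p, ℓ p = ∑ j, Tr (p * v j) • ℓ (b j) := fun p => by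
    conv_lhs => rw [← b.sum_repr p]
    simp [b.repr_eq_trace_mul hdual]
  have hcyc : ∀ i j, Tr ((x * b i - b i * x) * v j) = Tr (b i * (v j * x - x * v j)) := by
    intro i j
    simp only [sub_mul, mul_sub, map_sub, mul_assoc]
    rw [hTr x]
    simp only [mul_assoc]
  calc ∑ i, ℓ (x * b i - b i * x) ⊗ₜ[F] v i
      = ∑ j, ∑ i, Tr (b i * (v j * x - x * v j)) • ℓ (b j) ⊗ₜ[F] v i := by
        simp only [hℓ (_ - _), sum_tmul, ← hcyc]
        exact Finset.sum_comm
    _ = ∑ j, ℓ (b j) ⊗ₜ (v j * x - x * v j) := by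
        simp only [← tmul_smul, ← tmul_sum, b.sum_trace_mul_smul_eq hTr hnd hdual]

end DualBasis

theorem stmt_14_general {F : Type*} [Field F]
    {g : Type*} [Ring g] [Algebra F g]
    {ι : Type*} [Fintype ι] [DecidableEq ι]
    (b : Module.Basis ι F g) (v : ι → g)
    (Tr : g →ₗ[F] F)
    (hTrc : ∀ p q : g, Tr (p * q - q * p) = 0)
    (hTrnd : ∀ p : g, (∀ q : g, Tr (p * q) = 0) → p = 0)
    (hdual : ∀ i j, Tr (b i * v j) = if i = j then (1 : F) else 0)
    (ℓ : g →ₗ[F] MvPolynomial ι F)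
    (hℓ : ∀ i, ℓ (b i) = MvPolynomial.X i)
    (k : ℕ)
    (Ck : MvPolynomial ι F)
    (hCk : Ck = ((k : F)⁻¹) •
      ∑ f : Fin k → ι,
        (∏ t, MvPolynomial.X (f t)) *
          MvPolynomial.C (Tr ((List.ofFn fun t => v (f t)).prod))) :
    ∀ x : g, ∑ i, MvPolynomial.pderiv i Ck * ℓ (x * b i - b i * x) = 0 := by
  intro x
  have hTr : ∀ p q, Tr (p * q) = Tr (q * p) := fun p q => sub_eq_zero.1 (by simpa using hTrc p q)
  let D : Derivation F (MvPolynomial ι F) (MvPolynomial ι F) :=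
    mkDerivation F fun i => ℓ (x * b i - b i * x)
  let δ := (D : MvPolynomial ι F →ₗ[F] MvPolynomial ι F).rTensor g
  let U : MvPolynomial ι F ⊗[F] g := ∑ i, X i ⊗ₜ v i
  let y : MvPolynomial ι F ⊗[F] g := 1 ⊗ₜ x
  have hCk_trace : Ck = (k : F)⁻¹ • baseChangeTrace Tr (U ^ k) := by
    simp [hCk, U, Finset.sum_pow_eq_sum_list_prod_ofFn,
      Algebra.TensorProduct.list_prod_ofFn_tmul, smul_eq_C_mul, mul_comm]
  have hδU : δ U = U * y - y * U :=
    calc δ U = ∑ i, ℓ (x * b i - b i * x) ⊗ₜ v i := by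
          simp only [δ, U, map_sum, LinearMap.rTensor_tmul, Derivation.coeFn_coe, D,
            mkDerivation_X]
      _ = ∑ j, X j ⊗ₜ (v j * x - x * v j) := by
          simpa only [hℓ] using b.sum_tmul_commutator hTr hTrnd hdual ℓ x
      _ = U * y - y * U := by
          simp only [U, y, Finset.sum_mul, Finset.mul_sum, Algebra.TensorProduct.tmul_mul_tmul,
            mul_one, one_mul, ← Finset.sum_sub_distrib, ← tmul_sub]
  calc ∑ i, pderiv i Ck * ℓ (x * b i - b i * x)
      = D Ck := by
        rw [derivation_eq_sum_pderiv_mul D]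
        simp only [D, mkDerivation_X]
    _ = (k : F)⁻¹ • baseChangeTrace Tr (δ (U ^ k)) := by
        rw [hCk_trace, D.map_smul, baseChangeTrace_rTensor, Derivation.coeFn_coe]
    _ = 0 := by
        rw [map_pow_eq_commutator_of_leibniz δ D.rTensor_mul hδU, map_sub,
          baseChangeTrace_mul_comm hTr, sub_self, smul_zero]

/-- The elements `C_k = (1/k) ∑_{i₁,…,i_k} u_{i₁} ⋯ u_{i_k} Tr (u^{i₁} ⋯ u^{i_k})`
of the symmetric algebra (realized as `MvPolynomial ι F`, with `u_i = b i` corresponding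
to `X i` and dual basis `u^i = v i`) are Casimirs:
`∑_i (∂C_k/∂u_i) [x, u_i] = 0` for all `x`. -/
theorem stmt_14 {F : Type*} [Field F] [CharZero F]
    {g : Type*} [Ring g] [Algebra F g] [FiniteDimensional F g]
    {ι : Type*} [Fintype ι] [DecidableEq ι]
    (b : Module.Basis ι F g) (v : ι → g)
    (Tr : g →ₗ[F] F)
    (hTrc : ∀ p q : g, Tr (p * q - q * p) = 0)
    (hTrnd : ∀ p : g, (∀ q : g, Tr (p * q) = 0) → p = 0)
    (hdual : ∀ i j, Tr (b i * v j) = if i = j then (1 : F) else 0)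
    (ℓ : g →ₗ[F] MvPolynomial ι F)
    (hℓ : ∀ i, ℓ (b i) = MvPolynomial.X i)
    (k : ℕ) (hk : 1 ≤ k)
    (Ck : MvPolynomial ι F)
    (hCk : Ck = ((k : F)⁻¹) •
      ∑ f : Fin k → ι,
        (∏ t, MvPolynomial.X (f t)) *
          MvPolynomial.C (Tr ((List.ofFn fun t => v (f t)).prod))) :
    ∀ x : g, ∑ i, MvPolynomial.pderiv i Ck * ℓ (x * b i - b i * x) = 0 :=
  stmt_14_general b v Tr hTrc hTrnd hdual ℓ hℓ k Ck hCk
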